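/- arXiv:1609.00955 — 2 statements merged into one kernel-verified Lean document; each statement's English description precedes it below -/
import Mathlib

section
/- Let M be a nonzero comultiplication R-module with exactly two minimal submodules S₁ and S₂. Then the large sum graph Ǵ(M) is the disjoint union of two complete subgraphs G₁ and G₂, where Gⱼ consists of the non-large submodules containing Sⱼ, and no vertex of G₁ is adjacent to a vertex of G₂. -/
/-- `M` is a comultiplication `R`-module: every submodule is of the form `(0 :_M I)`. -/
def IsComultiplication (R M : Type*) [CommRing R] [AddCommGroup M] [Module R M] : Prop :=
  ∀ N : Submodule R M, ∃ I : Ideal R, ∀ m : M, m ∈ N ↔ ∀ r ∈ I, r • m = 0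

/-- A submodule is large (essential) if it meets every nonzero submodule nontrivially. -/
def IsLarge {R M : Type*} [CommRing R] [AddCommGroup M] [Module R M]
    (N : Submodule R M) : Prop :=
  ∀ L : Submodule R M, L ≠ ⊥ → N ⊓ L ≠ ⊥

/-- The vertices of the large sum graph: nonzero non-large submodules. -/
abbrev LargeSumVtx (R M : Type*) [CommRing R] [AddCommGroup M] [Module R M] :=
  {N : Submodule R M // N ≠ ⊥ ∧ ¬ IsLarge N}

/-- The large sum graph: distinct nonzero non-large submodules `N, K` are adjacent
iff `N + K` is not large. -/
def largeSumGraph (R M : Type*) [CommRing R] [AddCommGroup M] [Module R M] :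
    SimpleGraph (LargeSumVtx R M) where
  Adj N K := N ≠ K ∧ ¬ IsLarge (N.1 ⊔ K.1)
  symm := ⟨fun a b ⟨h1, h2⟩ => ⟨h1.symm, by rwa [sup_comm]⟩⟩
  loopless := ⟨fun a h => h.1 rfl⟩

/-!
In a comultiplication module every submodule is the annihilator of its annihilator ideal, so
`L ≤ N ↔ ann N ≤ ann L`. Two consequences drive the proof. First, every nonzero submodule
contains a minimal one: for `m ≠ 0` and a maximal ideal `𝔪 ⊇ ann m`, Nakayama gives
`m ∉ 𝔪 • Rm`, and an element of `ann (𝔪 • Rm)` moves `m` to a nonzero element killed by `𝔪`.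
Hence a submodule is large iff it contains every minimal submodule. Second, since the annihilator
of a minimal submodule `S` is maximal, hence prime, `S ≤ N + K` forces `S ≤ N` or `S ≤ K`.
With exactly two minimal submodules `S₁, S₂`, a submodule is large iff it contains both, and the
theorem follows.
-/

section

open Submodule

variable {R M : Type*} [CommRing R] [AddCommGroup M] [Module R M]

theorem Submodule.notMem_smul_span_singleton_of_torsionOf_le {I : Ideal R} (hI : I ≠ ⊤)
    {m : M} (hm : Ideal.torsionOf R M m ≤ I) : m ∉ I • (R ∙ m) := by
  rintro h
  obtain ⟨a, haI, ham⟩ := mem_smul_span_singleton.mp h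
  have h1a : 1 - a ∈ I := hm <| by rw [Ideal.mem_torsionOf_iff, sub_smul, one_smul, ham, sub_self]
  exact hI <| (Ideal.eq_top_iff_one I).mpr <| by simpa using add_mem h1a haI

theorem Submodule.isAtom_span_singleton_of_isMaximal_torsionOf {k : M}
    (hk : (Ideal.torsionOf R M k).IsMaximal) : IsAtom (R ∙ k) :=
  isSimpleModule_iff_isAtom.mp <| isSimpleModule_iff_quot_maximal.mpr
    ⟨_, hk, ⟨(Ideal.quotTorsionOfEquivSpanSingleton R M k).symm⟩⟩

theorem IsLarge.atom_le {N S : Submodule R M} (hN : IsLarge N) (hS : IsAtom S) : S ≤ N :=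
  hS.not_disjoint_iff_le.mp <| by rw [disjoint_iff, inf_comm]; exact hN S hS.ne_bot

theorem isLarge_iff_forall_atom_le [IsAtomic (Submodule R M)] {N : Submodule R M} :
    IsLarge N ↔ ∀ S : Submodule R M, IsAtom S → S ≤ N := by
  refine ⟨fun hN S hS => hN.atom_le hS, fun h L hL hNL => ?_⟩
  obtain ⟨A, hA, hAL⟩ := (eq_bot_or_exists_atom_le L).resolve_left hL
  exact hA.ne_bot <| le_bot_iff.mp <| hNL ▸ le_inf (h A hA) hAL

namespace IsComultiplication

variable (hc : IsComultiplication R M)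
include hc

theorem le_iff_annihilator_le {L N : Submodule R M} : L ≤ N ↔ N.annihilator ≤ L.annihilator := by
  refine ⟨annihilator_mono, fun h m hm => ?_⟩
  obtain ⟨I, hI⟩ := hc N
  refine (hI m).mpr fun r hr => mem_annihilator.mp (h ?_) m hm
  exact mem_annihilator.mpr fun n hn => (hI n).mp hn r hr

theorem exists_mem_annihilator_smul_ne_zero {N : Submodule R M} {m : M} (hm : m ∉ N) :
    ∃ c ∈ N.annihilator, c • m ≠ 0 := by
  rw [← span_singleton_le_iff_mem, hc.le_iff_annihilator_le, SetLike.not_le_iff_exists] at hm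
  obtain ⟨c, hcN, hcm⟩ := hm
  exact ⟨c, hcN, (mem_annihilator_span_singleton m c).not.mp hcm⟩

theorem isAtomic : IsAtomic (Submodule R M) := by
  refine ⟨fun N => or_iff_not_imp_left.mpr fun hN => ?_⟩
  obtain ⟨m, hmN, hm0⟩ := (Submodule.ne_bot_iff N).mp hN
  obtain ⟨𝔪, h𝔪, hm𝔪⟩ := Ideal.exists_le_maximal _ ((Ideal.torsionOf_eq_top_iff R m).not.mpr hm0)
  obtain ⟨c, hc𝔪, hcm⟩ := hc.exists_mem_annihilator_smul_ne_zero
    (notMem_smul_span_singleton_of_torsionOf_le h𝔪.ne_top hm𝔪)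
  have h𝔪c : 𝔪 ≤ Ideal.torsionOf R M (c • m) := fun r hr => by
    rw [Ideal.mem_torsionOf_iff, smul_comm]
    exact mem_annihilator.mp hc𝔪 _ (smul_mem_smul hr (mem_span_singleton_self m))
  have htors : Ideal.torsionOf R M (c • m) = 𝔪 :=
    (h𝔪.eq_of_le ((Ideal.torsionOf_eq_top_iff R _).not.mpr hcm) h𝔪c).symm
  exact ⟨_, isAtom_span_singleton_of_isMaximal_torsionOf (htors ▸ h𝔪),
    (span_singleton_le_iff_mem _ _).mpr (N.smul_mem c hmN)⟩

theorem atom_le_or_le_of_le_sup {S N K : Submodule R M} (hS : IsAtom S) (h : S ≤ N ⊔ K) :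
    S ≤ N ∨ S ≤ K := by
  have := isSimpleModule_iff_isAtom.mpr hS
  have hprime : S.annihilator.IsPrime := IsSimpleModule.annihilator_isMaximal.isPrime
  rw [hc.le_iff_annihilator_le, annihilator_sup] at h
  rw [hc.le_iff_annihilator_le, hc.le_iff_annihilator_le, ← hprime.mul_le]
  exact Ideal.mul_le_inf.trans h

theorem largeSumGraph_adj_of_le_of_le {S T : Submodule R M} (hT : IsAtom T)
    (hlarge : ∀ N : Submodule R M, IsLarge N ↔ S ≤ N ∧ T ≤ N) {u v : LargeSumVtx R M}
    (hu : S ≤ u.1) (hv : S ≤ v.1) (huv : u ≠ v) : (largeSumGraph R M).Adj u v := by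
  refine ⟨huv, fun h => ?_⟩
  rcases hc.atom_le_or_le_of_le_sup hT ((hlarge _).mp h).2 with hTu | hTv
  exacts [u.2.2 ((hlarge _).mpr ⟨hu, hTu⟩), v.2.2 ((hlarge _).mpr ⟨hv, hTv⟩)]

end IsComultiplication

end

theorem stmt7_general {R M : Type*} [CommRing R] [AddCommGroup M] [Module R M]
    (hc : IsComultiplication R M)
    (S₁ S₂ : Submodule R M)
    (hmin : {S : Submodule R M | IsAtom S} = {S₁, S₂}) :
    (∀ v : LargeSumVtx R M, S₁ ≤ v.1 ∨ S₂ ≤ v.1) ∧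
    (∀ v : LargeSumVtx R M, ¬ (S₁ ≤ v.1 ∧ S₂ ≤ v.1)) ∧
    (∀ u v : LargeSumVtx R M, S₁ ≤ u.1 → S₁ ≤ v.1 → u ≠ v → (largeSumGraph R M).Adj u v) ∧
    (∀ u v : LargeSumVtx R M, S₂ ≤ u.1 → S₂ ≤ v.1 → u ≠ v → (largeSumGraph R M).Adj u v) ∧
    (∀ u v : LargeSumVtx R M, S₁ ≤ u.1 → S₂ ≤ v.1 → ¬ (largeSumGraph R M).Adj u v) := by
  have hatomic := hc.isAtomic
  have hatom : ∀ S : Submodule R M, IsAtom S ↔ S = S₁ ∨ S = S₂ := fun S => by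
    rw [← Set.mem_ofPred_eq (p := IsAtom), hmin, Set.mem_insert_iff, Set.mem_singleton_iff]
  have hlarge : ∀ N : Submodule R M, IsLarge N ↔ S₁ ≤ N ∧ S₂ ≤ N := fun N => by
    simp only [isLarge_iff_forall_atom_le, hatom, or_imp, forall_and, forall_eq]
  refine ⟨fun v => ?_, fun v => (hlarge _).not.mp v.2.2,
    fun u v => hc.largeSumGraph_adj_of_le_of_le ((hatom S₂).mpr (.inr rfl)) hlarge,
    fun u v => hc.largeSumGraph_adj_of_le_of_le ((hatom S₁).mpr (.inl rfl))
      fun N => (hlarge N).trans and_comm,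
    fun u v hu hv h => h.2 ((hlarge _).mpr ⟨le_sup_of_le_left hu, le_sup_of_le_right hv⟩)⟩
  obtain ⟨A, hA, hAv⟩ := (eq_bot_or_exists_atom_le v.1).resolve_left v.2.1
  rcases (hatom A).mp hA with rfl | rfl
  exacts [.inl hAv, .inr hAv]

/-- If a nonzero comultiplication module has exactly two minimal submodules `S₁, S₂`, then the
large sum graph is the disjoint union of the two complete subgraphs on the vertices containing
`S₁` resp. `S₂`, with no edges between them. -/
theorem stmt7 {R M : Type*} [CommRing R] [AddCommGroup M] [Module R M]
    [Nontrivial M] (hc : IsComultiplication R M)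
    (S₁ S₂ : Submodule R M) (hne : S₁ ≠ S₂)
    (hmin : {S : Submodule R M | IsAtom S} = {S₁, S₂}) :
    (∀ v : LargeSumVtx R M, S₁ ≤ v.1 ∨ S₂ ≤ v.1) ∧
    (∀ v : LargeSumVtx R M, ¬ (S₁ ≤ v.1 ∧ S₂ ≤ v.1)) ∧
    (∀ u v : LargeSumVtx R M, S₁ ≤ u.1 → S₁ ≤ v.1 → u ≠ v → (largeSumGraph R M).Adj u v) ∧
    (∀ u v : LargeSumVtx R M, S₂ ≤ u.1 → S₂ ≤ v.1 → u ≠ v → (largeSumGraph R M).Adj u v) ∧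
    (∀ u v : LargeSumVtx R M, S₁ ≤ u.1 → S₂ ≤ v.1 → ¬ (largeSumGraph R M).Adj u v) :=
  stmt7_general hc S₁ S₂ hmin
end

section
/- Let M be a nonzero comultiplication R-module. If the large sum graph Ǵ(M) is connected, then Ǵ(M) has no cut vertex. -/
/-!
In a comultiplication module every submodule is determined by its annihilator. Hence every
nonzero submodule contains a simple submodule, and a simple submodule `S` disjoint from `N` and
from `K` is disjoint from `N + K`: otherwise pick `i ∈ ann N`, `j ∈ ann K` outside the maximal
ideal `ann S`; then `i * j ∈ ann (N + K) ⊆ ann S`. So `N` is a vertex iff some simple submodule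
misses it, and two vertices are adjacent iff some simple submodule misses both.

If there are at least three simple submodules, two vertices `u, v ≠ a` are joined by a path
`u - W₁ - W₂ - v` through simple submodules `W₁, W₂ ≠ a`. Otherwise each vertex, containing one
of the at most two simple submodules, misses exactly one of them, so vertices are adjacent iff
they miss the same one; connectivity then makes the graph complete.
-/

open SimpleGraph

section

variable {R M : Type*} [CommRing R] [AddCommGroup M] [Module R M]

lemma not_isLarge_of_disjoint {S N : Submodule R M} (hS : S ≠ ⊥) (hSN : Disjoint S N) :
    ¬ IsLarge N :=
  fun hN => hN S hS (disjoint_iff.mp hSN.symm)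

lemma isAtom_span_singleton_of_le_torsionOf {P : Ideal R} (hP : P.IsMaximal) {x : M}
    (hx : x ≠ 0) (hPx : P ≤ Ideal.torsionOf R M x) : IsAtom (R ∙ x) := by
  have hmax : (Ideal.torsionOf R M x).IsMaximal := by
    rwa [← hP.eq_of_le (mt (Ideal.torsionOf_eq_top_iff R x).mp hx) hPx]
  exact isSimpleModule_iff_isAtom.mp <| isSimpleModule_iff_quot_maximal.mpr
    ⟨_, hmax, ⟨(Ideal.quotTorsionOfEquivSpanSingleton R M x).symm⟩⟩

namespace IsComultiplication

variable (hc : IsComultiplication R M)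
include hc

lemma le_of_annihilator_le {N K : Submodule R M} (h : N.annihilator ≤ K.annihilator) :
    K ≤ N := by
  obtain ⟨I, hI⟩ := hc N
  have hIN : I ≤ N.annihilator := fun r hr =>
    Submodule.mem_annihilator.mpr fun n hn => (hI n).mp hn r hr
  exact fun m hm => (hI m).mpr fun r hr => Submodule.mem_annihilator.mp (h (hIN hr)) m hm

lemma exists_isAtom_le {N : Submodule R M} (hN : N ≠ ⊥) : ∃ S, IsAtom S ∧ S ≤ N := by
  obtain ⟨m, hmN, hm⟩ := (Submodule.ne_bot_iff N).mp hN
  obtain ⟨P, hP, hmP⟩ := Ideal.exists_le_maximal _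
    (mt (Ideal.torsionOf_eq_top_iff R m).mp hm)
  have hm_notMem : m ∉ P • (R ∙ m) := by
    intro hmem
    obtain ⟨t, htP, htm⟩ := Submodule.mem_smul_span_singleton.mp hmem
    have h1t : 1 - t ∈ Ideal.torsionOf R M m := by
      rw [Ideal.mem_torsionOf_iff, sub_smul, one_smul, htm, sub_self]
    exact hP.ne_top ((Ideal.eq_top_iff_one P).mpr (by simpa using P.add_mem (hmP h1t) htP))
  have hann : ¬ (P • (R ∙ m)).annihilator ≤ (R ∙ m).annihilator := fun h =>
    hm_notMem (hc.le_of_annihilator_le h (Submodule.mem_span_singleton_self m))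
  -- `r • m ≠ 0` is killed by `P`, because `P • r • m ⊆ r • (P • Rm) = 0`.
  obtain ⟨r, hrB, hrm⟩ := Set.not_subset.mp hann
  rw [SetLike.mem_coe, Submodule.mem_annihilator_span_singleton] at hrm
  refine ⟨R ∙ (r • m), isAtom_span_singleton_of_le_torsionOf hP hrm fun t htP => ?_, ?_⟩
  · rw [Ideal.mem_torsionOf_iff, smul_comm]
    exact Submodule.mem_annihilator.mp hrB _
      (Submodule.smul_mem_smul htP (Submodule.mem_span_singleton_self m))
  · exact (Submodule.span_singleton_le_iff_mem _ _).mpr (N.smul_mem r hmN)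

lemma not_isLarge_iff {N : Submodule R M} :
    ¬ IsLarge N ↔ ∃ S, IsAtom S ∧ Disjoint S N := by
  refine ⟨fun hN => ?_, fun ⟨S, hS, hSN⟩ => not_isLarge_of_disjoint hS.ne_bot hSN⟩
  simp only [IsLarge, not_forall, not_not] at hN
  obtain ⟨L, hL, hNL⟩ := hN
  obtain ⟨S, hS, hSL⟩ := hc.exists_isAtom_le hL
  exact ⟨S, hS, (disjoint_iff.mpr hNL).symm.mono_left hSL⟩

lemma not_le_sup {S N K : Submodule R M} (hS : S.annihilator.IsPrime) (hN : ¬ S ≤ N)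
    (hK : ¬ S ≤ K) : ¬ S ≤ N ⊔ K := by
  intro hNK
  obtain ⟨i, hiN, hiS⟩ := Set.not_subset.mp (mt hc.le_of_annihilator_le hN)
  obtain ⟨j, hjK, hjS⟩ := Set.not_subset.mp (mt hc.le_of_annihilator_le hK)
  have hij : i * j ∈ (N ⊔ K).annihilator := by
    rw [Submodule.annihilator_sup]
    exact ⟨Ideal.mul_mem_right j _ hiN, Ideal.mul_mem_left _ i hjK⟩
  rcases hS.mem_or_mem (Submodule.annihilator_mono hNK hij) with h | h
  exacts [hiS h, hjS h]

lemma disjoint_sup_iff {S N K : Submodule R M} (hS : IsAtom S) :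
    Disjoint S (N ⊔ K) ↔ Disjoint S N ∧ Disjoint S K := by
  refine ⟨fun h => ⟨h.mono_right le_sup_left, h.mono_right le_sup_right⟩, fun ⟨hN, hK⟩ => ?_⟩
  have : IsSimpleModule R S := isSimpleModule_iff_isAtom.mpr hS
  simp only [← hS.not_le_iff_disjoint] at hN hK ⊢
  exact hc.not_le_sup IsSimpleModule.annihilator_isMaximal.isPrime hN hK

lemma largeSumGraph_adj_iff {N K : LargeSumVtx R M} :
    (largeSumGraph R M).Adj N K ↔
      N ≠ K ∧ ∃ S, IsAtom S ∧ Disjoint S N.1 ∧ Disjoint S K.1 := by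
  simp only [largeSumGraph, hc.not_isLarge_iff]
  refine and_congr_right fun _ => exists_congr fun S => ?_
  exact ⟨fun ⟨hS, h⟩ => ⟨hS, (hc.disjoint_sup_iff hS).mp h⟩,
    fun ⟨hS, h⟩ => ⟨hS, (hc.disjoint_sup_iff hS).mpr h⟩⟩

lemma reachable_induce_of_disjoint {s : Set (LargeSumVtx R M)} {u v : s}
    {S : Submodule R M} (hS : IsAtom S) (hu : Disjoint S u.1.1) (hv : Disjoint S v.1.1) :
    ((largeSumGraph R M).induce s).Reachable u v := by
  obtain rfl | huv := eq_or_ne u v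
  · rfl
  exact Adj.reachable <| (hc.largeSumGraph_adj_iff).mpr
    ⟨fun h => huv (Subtype.ext h), S, hS, hu, hv⟩

lemma preconnected_induce_ne_of_forall_exists_isAtom_ne
    (h3 : ∀ X Y : Submodule R M, ∃ W, IsAtom W ∧ W ≠ X ∧ W ≠ Y) (a : LargeSumVtx R M) :
    ((largeSumGraph R M).induce {b | b ≠ a}).Preconnected := by
  intro u v
  obtain ⟨S, hS, hSu⟩ := hc.not_isLarge_iff.mp u.1.2.2
  obtain ⟨T, hT, hTv⟩ := hc.not_isLarge_iff.mp v.1.2.2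
  obtain ⟨W₁, hW₁, hW₁S, hW₁a⟩ := h3 S a.1
  obtain ⟨W₂, hW₂, hW₂T, hW₂a⟩ := h3 T a.1
  obtain ⟨W, hW, hWW₁, hWW₂⟩ := h3 W₁ W₂
  have hSW₁ := hS.disjoint_of_ne hW₁ hW₁S.symm
  have hTW₂ := hT.disjoint_of_ne hW₂ hW₂T.symm
  let w₁ : {b | b ≠ a} :=
    ⟨⟨W₁, hW₁.ne_bot, not_isLarge_of_disjoint hS.ne_bot hSW₁⟩, fun h => hW₁a congr($h.1)⟩
  let w₂ : {b | b ≠ a} :=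
    ⟨⟨W₂, hW₂.ne_bot, not_isLarge_of_disjoint hT.ne_bot hTW₂⟩, fun h => hW₂a congr($h.1)⟩
  exact (hc.reachable_induce_of_disjoint (v := w₁) hS hSu hSW₁).trans <|
    (hc.reachable_induce_of_disjoint hW (hW.disjoint_of_ne hW₁ hWW₁)
      (hW.disjoint_of_ne hW₂ hWW₂)).trans <|
    hc.reachable_induce_of_disjoint (u := w₂) hT hTW₂ hTv

lemma eq_of_disjoint_of_disjoint {X Y : Submodule R M}
    (hXY : ∀ S, IsAtom S → S = X ∨ S = Y) {N V W : Submodule R M} (hN : N ≠ ⊥)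
    (hV : IsAtom V) (hW : IsAtom W) (hVN : Disjoint V N) (hWN : Disjoint W N) : V = W := by
  obtain ⟨T, hT, hTN⟩ := hc.exists_isAtom_le hN
  have hTV : T ≠ V := fun h => hV.ne_bot (hVN.eq_bot_of_le (h ▸ hTN))
  have hTW : T ≠ W := fun h => hW.ne_bot (hWN.eq_bot_of_le (h ▸ hTN))
  rcases hXY T hT with rfl | rfl <;> rcases hXY V hV with rfl | rfl <;>
    rcases hXY W hW with rfl | rfl <;> simp_all

lemma exists_isAtom_disjoint_of_reachable {X Y : Submodule R M}
    (hXY : ∀ S, IsAtom S → S = X ∨ S = Y) {N K : LargeSumVtx R M}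
    (h : (largeSumGraph R M).Reachable N K) :
    ∃ S, IsAtom S ∧ Disjoint S N.1 ∧ Disjoint S K.1 := by
  obtain ⟨p⟩ := h
  induction p with
  | @nil N =>
    obtain ⟨S, hS, hSN⟩ := hc.not_isLarge_iff.mp N.2.2
    exact ⟨S, hS, hSN, hSN⟩
  | @cons N L K hadj _ ih =>
    obtain ⟨V, hV, hVL, hVK⟩ := ih
    obtain ⟨-, W, hW, hWN, hWL⟩ := hc.largeSumGraph_adj_iff.mp hadj
    exact ⟨W, hW, hWN, hc.eq_of_disjoint_of_disjoint hXY L.2.1 hW hV hWL hVL ▸ hVK⟩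

end IsComultiplication

end

theorem stmt10_general {R M : Type*} [CommRing R] [AddCommGroup M] [Module R M]
    (hc : IsComultiplication R M)
    (h : (largeSumGraph R M).Connected) :
    ∀ a : LargeSumVtx R M,
      ((largeSumGraph R M).induce {b : LargeSumVtx R M | b ≠ a}).Preconnected := by
  intro a
  by_cases h3 : ∀ X Y : Submodule R M, ∃ W, IsAtom W ∧ W ≠ X ∧ W ≠ Y
  · exact hc.preconnected_induce_ne_of_forall_exists_isAtom_ne h3 a
  obtain ⟨X, Y, hXY⟩ : ∃ X Y : Submodule R M, ∀ S, IsAtom S → S = X ∨ S = Y := by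
    push Not at h3
    obtain ⟨X, Y, hXY⟩ := h3
    exact ⟨X, Y, fun S hS => or_iff_not_imp_left.mpr (hXY S hS)⟩
  intro u v
  obtain ⟨S, hS, hSu, hSv⟩ :=
    hc.exists_isAtom_disjoint_of_reachable hXY (h.preconnected u.1 v.1)
  exact hc.reachable_induce_of_disjoint hS hSu hSv

/-- If the large sum graph of a nonzero comultiplication module is connected, then it has no
cut vertex: removing any vertex leaves a (pre)connected graph. -/
theorem stmt10 {R M : Type*} [CommRing R] [AddCommGroup M] [Module R M]
    [Nontrivial M] (hc : IsComultiplication R M)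
    (h : (largeSumGraph R M).Connected) :
    ∀ a : LargeSumVtx R M,
      ((largeSumGraph R M).induce {b : LargeSumVtx R M | b ≠ a}).Preconnected :=
  stmt10_general hc h
end
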